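/- Let K be a finite set of components, n ∈ ℕ the number of stages, φ : K × {0, ..., n−1} → ℝ the stage-dependent component failure probabilities, and τ : K → {0, ..., n} the failure-stage map (τ(k) = j < n means component k fails at stage j; τ(k) = n means component k never fails along the path). Then the stage-wise double product equals the component-wise product of per-component factors: ∏_{j=0}^{n−1} [ ∏_{k : τ(k) = j} φ(k, j) · ∏_{k : τ(k) > j} (1 − φ(k, j)) ] = ∏_{k ∈ K} Γ(k), where Γ(k) = ∏_{j=0}^{τ(k)−1} (1 − φ(k, j)) if τ(k) = n, and Γ(k) = φ(k, τ(k)) · ∏_{j=0}^{τ(k)−1} (1 − φ(k, j)) if τ(k) < n. -/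

import Mathlib

open Finset

namespace CascadingOutage

variable {M : Type*} [CommMonoid M]

/-- The factor contributed at stage `j` by a component with failure stage `t`, failure
probabilities `f` and survival probabilities `g`. Both sides of the theorem are the product of
these factors over all (component, stage) pairs, taken stage by stage resp. component by
component. -/
def pathFactor (f g : ℕ → M) (t j : ℕ) : M :=
  if j < t then g j else if j = t then f j else 1

theorem pathFactor_of_lt {f g : ℕ → M} {t j : ℕ} (h : j < t) : pathFactor f g t j = g j :=
  if_pos h

theorem pathFactor_self (f g : ℕ → M) (t : ℕ) : pathFactor f g t t = f t := by
  simp [pathFactor]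

theorem pathFactor_of_gt {f g : ℕ → M} {t j : ℕ} (h : t < j) : pathFactor f g t j = 1 := by
  simp [pathFactor, h.not_gt, h.ne']

theorem prod_range_pathFactor_self (f g : ℕ → M) (t : ℕ) :
    ∏ j ∈ range t, pathFactor f g t j = ∏ j ∈ range t, g j :=
  prod_congr rfl fun _ hj => pathFactor_of_lt (mem_range.1 hj)

theorem prod_range_pathFactor_of_lt (f g : ℕ → M) {t n : ℕ} (h : t < n) :
    ∏ j ∈ range n, pathFactor f g t j = f t * ∏ j ∈ range t, g j := by
  have hafter : ∏ j ∈ Ico (t + 1) n, pathFactor f g t j = 1 :=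
    prod_eq_one fun _ hj => pathFactor_of_gt (Nat.lt_of_succ_le (mem_Ico.1 hj).1)
  rw [← prod_range_mul_prod_Ico _ h, hafter, mul_one, prod_range_succ,
    prod_range_pathFactor_self, pathFactor_self, mul_comm]

theorem prod_filter_mul_prod_filter_eq_prod_pathFactor {K : Type*} (s : Finset K)
    (f g : K → ℕ → M) (τ : K → ℕ) (j : ℕ) :
    (∏ k ∈ s.filter (fun k => τ k = j), f k j) * ∏ k ∈ s.filter (fun k => j < τ k), g k j
      = ∏ k ∈ s, pathFactor (f k) (g k) (τ k) j := by
  rw [prod_filter, prod_filter, ← prod_mul_distrib]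
  refine prod_congr rfl fun k _ => ?_
  rcases lt_trichotomy j (τ k) with h | rfl | h
  · simp [pathFactor_of_lt h, h.ne', h]
  · simp [pathFactor_self]
  · simp [pathFactor_of_gt h, h.ne, h.not_gt]

end CascadingOutage

open CascadingOutage

/-- The stage-wise double product of component failure/survival probabilities
along a cascading-outage path equals the component-wise product of per-component
factors `Γ(k)`:  here `τ k < n` means component `k` fails exactly at stage
`τ k` (surviving all earlier stages), and `τ k = n` means it never fails. -/
theorem stagewise_eq_componentwise_product
    {K : Type*} [Fintype K] (n : ℕ)
    (φ : K → ℕ → ℝ) (τ : K → ℕ) (hτ : ∀ k, τ k ≤ n) :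
    ∏ j ∈ Finset.range n,
        ((∏ k ∈ Finset.univ.filter (fun k => τ k = j), φ k j) *
          ∏ k ∈ Finset.univ.filter (fun k => j < τ k), (1 - φ k j))
      = ∏ k : K,
          (if τ k = n then ∏ j ∈ Finset.range (τ k), (1 - φ k j)
           else φ k (τ k) * ∏ j ∈ Finset.range (τ k), (1 - φ k j)) := by
  let survive : K → ℕ → ℝ := fun k j => 1 - φ k j
  calc _ = ∏ j ∈ range n, ∏ k, pathFactor (φ k) (survive k) (τ k) j :=
        prod_congr rfl fun j _ => prod_filter_mul_prod_filter_eq_prod_pathFactor _ φ survive τ j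
    _ = ∏ k, ∏ j ∈ range n, pathFactor (φ k) (survive k) (τ k) j := prod_comm
    _ = _ := prod_congr rfl fun k _ => by
        rcases (hτ k).eq_or_lt with h | h
        · rw [if_pos h, ← h, prod_range_pathFactor_self]
        · rw [if_neg h.ne, prod_range_pathFactor_of_lt _ _ h]
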